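/- arXiv:2503.04561 — 2 statements merged into one kernel-verified Lean document; each statement's English description precedes it below -/
import Mathlib

section
/- For every even integer m ≥ 2, gcd(2(m⁴ - 1), m⁴ - 1 - 4m²) = 1. -/
/-!
Write `b = m⁴ - 1 - 4m²`. Then `b + 1 = m²(m² - 4)` is a multiple of `2m` when `m` is even, so
`b` is coprime to `2m`, hence to `2` and to `(2m)² = (m⁴ - 1) - b`, i.e. to `m⁴ - 1`.
-/

section

variable {R : Type*} [CommRing R]

theorem two_mul_dvd_pow_four_sub_four_mul_sq {m : R} (hm : Even m) :
    2 * m ∣ m ^ 4 - 4 * m ^ 2 := by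
  have h : 2 * m ∣ m * m := mul_dvd_mul_right hm.two_dvd m
  exact (h.mul_right (m ^ 2 - 4)).trans (dvd_of_eq (by ring))

theorem isCoprime_pow_four_sub_one_sub_four_mul_sq {m : R} (hm : Even m) :
    IsCoprime (m ^ 4 - 1 - 4 * m ^ 2) (2 * m) := by
  rw [show m ^ 4 - 1 - 4 * m ^ 2 = (m ^ 4 - 4 * m ^ 2) - 1 by ring]
  exact .sub_one_left_of_dvd (two_mul_dvd_pow_four_sub_four_mul_sq hm)

end

theorem stmt5_general (m : ℤ) (hme : Even m) :
    Int.gcd (2 * (m ^ 4 - 1)) (m ^ 4 - 1 - 4 * m ^ 2) = 1 := by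
  rw [← Int.isCoprime_iff_gcd_eq_one]
  have hb := isCoprime_pow_four_sub_one_sub_four_mul_sq hme
  have hb_two : IsCoprime (m ^ 4 - 1 - 4 * m ^ 2) 2 := hb.of_mul_right_left
  have hb_a : IsCoprime (m ^ 4 - 1 - 4 * m ^ 2) (m ^ 4 - 1) := by
    have h := (hb.pow_right (n := 2)).add_mul_left_right 1
    rwa [show (2 * m) ^ 2 + (m ^ 4 - 1 - 4 * m ^ 2) * 1 = m ^ 4 - 1 by ring] at h
  exact (hb_two.mul_right hb_a).symm

/-- For every even integer m ≥ 2, gcd(2(m⁴ - 1), m⁴ - 1 - 4m²) = 1. -/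
theorem stmt5 (m : ℤ) (hm : 2 ≤ m) (hme : Even m) :
    Int.gcd (2 * (m ^ 4 - 1)) (m ^ 4 - 1 - 4 * m ^ 2) = 1 :=
  stmt5_general m hme
end

section
/- Let m ≥ 4 be an even integer with m - 1 and m + 1 prime, and let E_m be the elliptic curve over ℚ defined by y² = (x - (m⁴-1))(x + (m⁴-1))(x - 4m²). Then the torsion subgroup of E_m(ℚ) is isomorphic to ℤ/2ℤ × ℤ/2ℤ. -/
/-!
Write `E_m : y² = (x - e₁)(x - e₂)(x - e₃)` with `e₁ = m⁴ - 1`, `e₂ = -e₁`, `e₃ = 4m²`. All three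
are `2`-adic integers, and `e₁ - e₂ = 2(m⁴ - 1)` has `2`-adic valuation exactly `1` since `m` is
even.

A point with `|x|₂ > 1` has `|y|₂² = |x|₂³`, and doubling it multiplies `|x|₂` by `4`; as a torsion
point has only finitely many multiples, its `x` is `2`-integral. If `S` is torsion and
`2S = (x, y)`, then `x - e₁ = a²` and `x - e₂ = b²` (the usual `2`-descent criterion) with `a`, `b`
`2`-integral. But `a² - b² = (a - b)(a + b)`, where the two factors differ by `2b`, never has
valuation exactly `1`. So every torsion point is killed by `2`, and the torsion subgroup is
`{O, (e₁, 0), (e₂, 0), (e₃, 0)}`.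
-/

/-- The elliptic curve y² = (x - (m⁴-1))(x + (m⁴-1))(x - 4m²) over ℚ, in
Weierstrass form y² = x³ - 4m²x² - (m⁴-1)²x + 4m²(m⁴-1)². -/
def Wm (m : ℤ) : WeierstrassCurve.Affine ℚ :=
  { a₁ := 0, a₂ := -(4 * (m : ℚ) ^ 2), a₃ := 0, a₄ := -((m : ℚ) ^ 4 - 1) ^ 2,
    a₆ := 4 * (m : ℚ) ^ 2 * ((m : ℚ) ^ 4 - 1) ^ 2 }


theorem AddCommGroup.nonempty_addEquiv_zmod_two_prod {G : Type*} [AddCommGroup G]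
    (h2 : ∀ g : G, g + g = 0) {t₁ t₂ t₃ : G} (h₁ : t₁ ≠ 0) (h₂ : t₂ ≠ 0) (h₁₂ : t₁ ≠ t₂)
    (hG : ∀ g, g = 0 ∨ g = t₁ ∨ g = t₂ ∨ g = t₃) : Nonempty (G ≃+ ZMod 2 × ZMod 2) := by
  have h_eq_of_add : ∀ a b : G, a + b = 0 → a = b := fun a b h => by
    rwa [add_eq_zero_iff_eq_neg, neg_eq_of_add_eq_zero_left (h2 b)] at h
  have ht₃ : t₁ + t₂ = t₃ := by
    rcases hG (t₁ + t₂) with h | h | h | h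
    · exact absurd (h_eq_of_add _ _ h) h₁₂
    · exact absurd (by simpa using h) h₂
    · exact absurd (by simpa using h) h₁
    · exact h
  let _ : Module (ZMod 2) G := AddCommGroup.zmodModule (by simpa [two_nsmul] using h2)
  let f : ZMod 2 × ZMod 2 →ₗ[ZMod 2] G :=
    (LinearMap.toSpanSingleton (ZMod 2) G t₁).coprod (LinearMap.toSpanSingleton (ZMod 2) G t₂)
  have hf : ∀ a b : ZMod 2, f (a, b) = a • t₁ + b • t₂ := fun _ _ => rfl
  have hinj : Function.Injective f := by
    refine (injective_iff_map_eq_zero f).mpr fun ⟨a, b⟩ h => ?_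
    rw [hf] at h
    have hz : ∀ z : ZMod 2, z = 0 ∨ z = 1 := by decide
    rcases hz a with rfl | rfl <;> rcases hz b with rfl | rfl <;>
      simp only [zero_smul, one_smul, add_zero, zero_add] at h
    · rfl
    · exact absurd h h₂
    · exact absurd h h₁
    · exact absurd (h_eq_of_add _ _ h) h₁₂
  have hsurj : Function.Surjective f := by
    intro g
    rcases hG g with rfl | rfl | rfl | rfl
    · exact ⟨(0, 0), by simp [hf]⟩
    · exact ⟨(1, 0), by simp [hf]⟩
    · exact ⟨(0, 1), by simp [hf]⟩
    · exact ⟨(1, 1), by simp [hf, ht₃]⟩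
  exact ⟨(LinearEquiv.ofBijective f ⟨hinj, hsurj⟩).toAddEquiv.symm⟩

namespace padicNorm

variable {p : ℕ} [Fact p.Prime]

protected lemma pow (q : ℚ) (n : ℕ) : padicNorm p (q ^ n) = padicNorm p q ^ n :=
  IsAbsoluteValue.abv_pow _ q n

lemma add_eq_left_of_lt {q r : ℚ} (h : padicNorm p r < padicNorm p q) :
    padicNorm p (q + r) = padicNorm p q := by
  rw [add_eq_max_of_ne h.ne', max_eq_left h.le]

lemma le_inv_of_lt_one {q : ℚ} (h : padicNorm p q < 1) : padicNorm p q ≤ (p : ℚ)⁻¹ := by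
  rcases eq_or_ne q 0 with rfl | hq
  · simp
  obtain ⟨z, hz⟩ := padicNorm.values_discrete (p := p) hq
  have hp : (1 : ℚ) < p := by exact_mod_cast (Fact.out : p.Prime).one_lt
  rw [hz] at h ⊢
  rw [← zpow_neg_one]
  have : -z < 0 := (zpow_lt_one_iff_right₀ hp).mp h
  exact zpow_le_zpow_right₀ hp.le (by omega)

end padicNorm

lemma padicNorm_two_two : padicNorm 2 2 = 2⁻¹ := by
  simpa using padicNorm.padicNorm_p_of_prime (p := 2)

lemma padicNorm_sq_sub_sq_ne_inv_two {a b : ℚ} (ha : padicNorm 2 a ≤ 1)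
    (hb : padicNorm 2 b ≤ 1) : padicNorm 2 (a ^ 2 - b ^ 2) ≠ 2⁻¹ := by
  have h2b : padicNorm 2 (2 * b) ≤ 2⁻¹ := by
    rw [padicNorm.mul, padicNorm_two_two]; nlinarith [padicNorm.nonneg (p := 2) b]
  have hu : padicNorm 2 (a - b) ≤ 1 := padicNorm.sub.trans (max_le ha hb)
  rw [show a ^ 2 - b ^ 2 = (a - b) * ((a - b) + 2 * b) by ring, padicNorm.mul]
  rcases hu.lt_or_eq with hu | hu
  · have hu' := padicNorm.le_inv_of_lt_one hu
    have hw : padicNorm 2 (a - b + 2 * b) ≤ 2⁻¹ :=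
      padicNorm.nonarchimedean.trans (max_le (by exact_mod_cast hu') h2b)
    push_cast at hu'
    nlinarith [padicNorm.nonneg (p := 2) (a - b), padicNorm.nonneg (p := 2) (a - b + 2 * b)]
  · rw [padicNorm.add_eq_left_of_lt (by rw [hu]; linarith), hu]
    norm_num

namespace WeierstrassCurve.Affine

section Field

variable {F : Type*} [Field F] [DecidableEq F] {W : Affine F}

lemma slope_self_of_a₁_eq_zero (ha₁ : W.a₁ = 0) (ha₃ : W.a₃ = 0) {x y : F}
    (hy : y ≠ W.negY x y) :
    W.slope x x y y = (3 * x ^ 2 + 2 * W.a₂ * x + W.a₄) / (2 * y) := by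
  rw [slope_of_Y_ne rfl hy, negY, ha₁, ha₃]
  congr 1 <;> ring

lemma isSquare_addX_self_sub (ha₁ : W.a₁ = 0) (ha₃ : W.a₃ = 0) {x y e : F}
    (h : W.Equation x y) (hy : y ≠ W.negY x y) (he : W.Equation e 0) :
    IsSquare (W.addX x x (W.slope x x y y) - e) := by
  rw [slope_self_of_a₁_eq_zero ha₁ ha₃ hy]
  rw [equation_iff, ha₁, ha₃] at h
  rw [equation_iff] at he
  rw [negY, ha₁, ha₃] at hy
  have h2y : 2 * y ≠ 0 := fun h0 => hy (by linear_combination h0)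
  have h2 : (2 : F) ≠ 0 := left_ne_zero_of_mul h2y
  have hy0 : y ≠ 0 := right_ne_zero_of_mul h2y
  refine ⟨((x - e) ^ 2 - (3 * e ^ 2 + 2 * W.a₂ * e + W.a₄)) / (2 * y), ?_⟩
  rw [addX, ha₁]
  field_simp
  linear_combination (-4 * (W.a₂ + 2 * x + e)) * h + 4 * (W.a₂ + 2 * x + e) * he

namespace Point

lemma some_add_self_eq_zero_iff {x y : F} (h : W.Nonsingular x y) :
    some x y h + some x y h = 0 ↔ y = W.negY x y :=
  ⟨fun h0 => by_contra fun hy => some_ne_zero _ ((add_self_of_Y_ne hy).symm.trans h0),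
    add_self_of_Y_eq⟩

lemma isSquare_sub_of_add_self_eq_some (ha₁ : W.a₁ = 0) (ha₃ : W.a₃ = 0) {e : F}
    (he : W.Equation e 0) {S : W.Point} {x y : F} {h : W.Nonsingular x y}
    (hS : S + S = some x y h) : IsSquare (x - e) := by
  rcases S with _ | @⟨x₀, y₀, h₀⟩
  · exact absurd hS.symm (some_ne_zero h)
  · have hy : y₀ ≠ W.negY x₀ y₀ := fun hy =>
      some_ne_zero h (hS.symm.trans ((some_add_self_eq_zero_iff h₀).mpr hy))
    rw [add_self_of_Y_ne hy, some.injEq] at hS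
    exact hS.1 ▸ isSquare_addX_self_sub ha₁ ha₃ h₀.1 hy he

end Point

end Field

section TwoAdic

variable {W : Affine ℚ}

variable (W) in
/-- `|x(P)|_p`, with the junk value `0` at the point at infinity. -/
noncomputable def Point.padicNormX (p : ℕ) : W.Point → ℚ
  | 0 => 0
  | some x _ _ => padicNorm p x

variable (ha₁ : W.a₁ = 0) (ha₃ : W.a₃ = 0) (ha₂ : padicNorm 2 W.a₂ ≤ 1)
  (ha₄ : padicNorm 2 W.a₄ ≤ 1) (ha₆ : padicNorm 2 W.a₆ ≤ 1)
include ha₁ ha₃ ha₂ ha₄ ha₆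

lemma padicNorm_Y_sq_eq_X_cube_of_one_lt {x y : ℚ} (h : W.Equation x y) (hx : 1 < padicNorm 2 x) :
    padicNorm 2 y ^ 2 = padicNorm 2 x ^ 3 := by
  rw [equation_iff, ha₁, ha₃] at h
  have hy : y ^ 2 = x ^ 3 + (W.a₂ * x ^ 2 + W.a₄ * x + W.a₆) := by linear_combination h
  have hrest : padicNorm 2 (W.a₂ * x ^ 2 + W.a₄ * x + W.a₆) < padicNorm 2 (x ^ 3) := by
    have hx0 := zero_lt_one.trans hx
    calc padicNorm 2 (W.a₂ * x ^ 2 + W.a₄ * x + W.a₆)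
        ≤ max (max (padicNorm 2 W.a₂ * padicNorm 2 x ^ 2) (padicNorm 2 W.a₄ * padicNorm 2 x))
            (padicNorm 2 W.a₆) := by
          rw [← padicNorm.pow, ← padicNorm.mul, ← padicNorm.mul]
          exact padicNorm.nonarchimedean.trans (max_le_max_right _ padicNorm.nonarchimedean)
      _ ≤ padicNorm 2 x ^ 2 := by
          refine max_le (max_le ?_ ?_) ?_ <;> nlinarith
      _ < padicNorm 2 (x ^ 3) := by rw [padicNorm.pow]; exact pow_lt_pow_right₀ hx (by norm_num)
  rw [← padicNorm.pow, hy, padicNorm.add_eq_left_of_lt hrest, padicNorm.pow]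

lemma padicNorm_addX_self_of_one_lt {x y : ℚ} (h : W.Equation x y) (hx : 1 < padicNorm 2 x) :
    y ≠ W.negY x y ∧ padicNorm 2 (W.addX x x (W.slope x x y y)) = 4 * padicNorm 2 x := by
  have hY := padicNorm_Y_sq_eq_X_cube_of_one_lt ha₁ ha₃ ha₂ ha₄ ha₆ h hx
  have hx0 : 0 < padicNorm 2 x := zero_lt_one.trans hx
  have hy0 : y ≠ 0 := by
    rintro rfl
    simp only [padicNorm.zero] at hY
    nlinarith [pow_pos hx0 3]
  have hy : y ≠ W.negY x y := by
    rw [negY, ha₁, ha₃]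
    intro h0
    exact hy0 (by linear_combination h0 / 2)
  refine ⟨hy, ?_⟩
  have h3 : padicNorm 2 3 = 1 := by
    simpa using (padicNorm.nat_eq_one_iff (p := 2) 3).mpr (by norm_num)
  have hN : padicNorm 2 (3 * x ^ 2 + 2 * W.a₂ * x + W.a₄) = padicNorm 2 x ^ 2 := by
    have hlow : padicNorm 2 (2 * W.a₂ * x + W.a₄) < padicNorm 2 (3 * x ^ 2) := by
      calc padicNorm 2 (2 * W.a₂ * x + W.a₄)
          ≤ max (2⁻¹ * padicNorm 2 W.a₂ * padicNorm 2 x) (padicNorm 2 W.a₄) := by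
            rw [← padicNorm_two_two, ← padicNorm.mul, ← padicNorm.mul]
            exact padicNorm.nonarchimedean
        _ ≤ padicNorm 2 x := max_le (by nlinarith [padicNorm.nonneg (p := 2) W.a₂]) (by linarith)
        _ < padicNorm 2 (3 * x ^ 2) := by rw [padicNorm.mul, padicNorm.pow, h3]; nlinarith
    rw [add_assoc, padicNorm.add_eq_left_of_lt hlow, padicNorm.mul, padicNorm.pow, h3, one_mul]
  have hslope : padicNorm 2 (W.slope x x y y ^ 2) = 4 * padicNorm 2 x := by
    rw [slope_self_of_a₁_eq_zero ha₁ ha₃ hy, padicNorm.pow, padicNorm.div, padicNorm.mul, hN,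
      padicNorm_two_two]
    field_simp
    rw [hY]
    ring
  have hlow : padicNorm 2 (-(W.a₂ + 2 * x)) < padicNorm 2 (W.slope x x y y ^ 2) := by
    calc padicNorm 2 (-(W.a₂ + 2 * x))
        ≤ max (padicNorm 2 W.a₂) (2⁻¹ * padicNorm 2 x) := by
          rw [padicNorm.neg, ← padicNorm_two_two, ← padicNorm.mul]
          exact padicNorm.nonarchimedean
      _ < padicNorm 2 (W.slope x x y y ^ 2) := by
          rw [hslope]; exact max_lt (by linarith) (by linarith)
  rw [addX, ha₁, show ∀ l : ℚ, l ^ 2 + 0 * l - W.a₂ - x - x = l ^ 2 + -(W.a₂ + 2 * x) by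
      intro; ring, padicNorm.add_eq_left_of_lt hlow, hslope]

namespace Point

lemma padicNormX_add_self {P : W.Point} (hP : 1 < P.padicNormX W 2) :
    (P + P).padicNormX W 2 = 4 * P.padicNormX W 2 := by
  rcases P with _ | @⟨x, y, h⟩
  · exact absurd hP (by simp [padicNormX])
  · obtain ⟨hy, hnorm⟩ := padicNorm_addX_self_of_one_lt ha₁ ha₃ ha₂ ha₄ ha₆ h.1 hP
    rw [add_self_of_Y_ne hy]
    exact hnorm

lemma padicNormX_two_pow_nsmul {P : W.Point} (hP : 1 < P.padicNormX W 2) (n : ℕ) :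
    (2 ^ n • P).padicNormX W 2 = 4 ^ n * P.padicNormX W 2 := by
  induction n with
  | zero => simp
  | succ n ih =>
    have h4n : (1 : ℚ) ≤ 4 ^ n := one_le_pow₀ (by norm_num)
    rw [pow_succ, mul_nsmul, two_nsmul,
      padicNormX_add_self ha₁ ha₃ ha₂ ha₄ ha₆ (by rw [ih]; nlinarith), ih]
    ring

theorem padicNormX_le_one_of_isOfFinAddOrder {P : W.Point} (hP : IsOfFinAddOrder P) :
    P.padicNormX W 2 ≤ 1 := by
  by_contra! hlt
  have hinj : Function.Injective fun n : ℕ => 2 ^ n • P := by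
    intro i j hij
    have := congrArg (padicNormX W 2) hij
    simp only [padicNormX_two_pow_nsmul ha₁ ha₃ ha₂ ha₄ ha₆ hlt] at this
    exact pow_right_injective₀ (by norm_num : (0 : ℚ) < 4) (by norm_num)
      (mul_right_cancel₀ (zero_lt_one.trans hlt).ne' this)
  exact Set.infinite_of_injective_forall_mem hinj
    (fun n => (AddSubmonoid.mem_multiples_iff _ _).mpr ⟨_, rfl⟩) hP.finite_multiples

end Point

end TwoAdic

end WeierstrassCurve.Affine

lemma Int.cast_ne_zero_of_odd {k : ℤ} (hk : Odd k) : (k : ℚ) ≠ 0 :=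
  Int.cast_ne_zero.mpr (by rintro rfl; simp at hk)

section Wm

open WeierstrassCurve.Affine WeierstrassCurve.Affine.Point

variable {m : ℤ}

lemma Wm_equation_iff {x y : ℚ} : (Wm m).Equation x y ↔
    y ^ 2 = (x - ((m : ℚ) ^ 4 - 1)) * (x + ((m : ℚ) ^ 4 - 1)) * (x - 4 * (m : ℚ) ^ 2) := by
  rw [equation_iff]
  simp only [Wm]
  constructor <;> intro h <;> linear_combination h

lemma Wm_Δ : (Wm m).Δ = 16 * (2 * ((m : ℚ) ^ 4 - 1)) ^ 2 * ((m : ℚ) ^ 4 - 1 - 4 * (m : ℚ) ^ 2) ^ 2 *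
    ((m : ℚ) ^ 4 - 1 + 4 * (m : ℚ) ^ 2) ^ 2 := by
  simp only [WeierstrassCurve.Δ, WeierstrassCurve.b₂, WeierstrassCurve.b₄, WeierstrassCurve.b₆,
    WeierstrassCurve.b₈, Wm]
  ring

lemma Even.odd_pow_four_sub_one (hme : Even m) : Odd (m ^ 4 - 1) := by
  obtain ⟨k, rfl⟩ := hme
  exact ⟨8 * k ^ 4 - 1, by ring⟩

lemma Wm_padicNormX_le_one_of_isOfFinAddOrder {P : (Wm m).Point} (hP : IsOfFinAddOrder P) :
    P.padicNormX (Wm m) 2 ≤ 1 := by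
  have ha₂ := padicNorm.of_int (p := 2) (-(4 * m ^ 2))
  have ha₄ := padicNorm.of_int (p := 2) (-(m ^ 4 - 1) ^ 2)
  have ha₆ := padicNorm.of_int (p := 2) (4 * m ^ 2 * (m ^ 4 - 1) ^ 2)
  push_cast at ha₂ ha₄ ha₆
  exact padicNormX_le_one_of_isOfFinAddOrder rfl rfl ha₂ ha₄ ha₆ hP

variable (hme : Even m)
include hme

lemma cast_pow_four_sub_one_ne_zero : (m : ℚ) ^ 4 - 1 ≠ 0 := by
  exact_mod_cast Int.cast_ne_zero_of_odd hme.odd_pow_four_sub_one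

lemma Wm_Δ_ne_zero : (Wm m).Δ ≠ 0 := by
  have hodd := hme.odd_pow_four_sub_one
  have h₁ := cast_pow_four_sub_one_ne_zero hme
  have h₂ : (m : ℚ) ^ 4 - 1 - 4 * (m : ℚ) ^ 2 ≠ 0 := by
    exact_mod_cast Int.cast_ne_zero_of_odd (hodd.sub_even ⟨2 * m ^ 2, by ring⟩)
  have h₃ : (m : ℚ) ^ 4 - 1 + 4 * (m : ℚ) ^ 2 ≠ 0 := by
    exact_mod_cast Int.cast_ne_zero_of_odd (hodd.add_even ⟨2 * m ^ 2, by ring⟩)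
  rw [Wm_Δ]
  simp [h₁, h₂, h₃]

lemma Wm_nonsingular {x y : ℚ} (h : (Wm m).Equation x y) : (Wm m).Nonsingular x y :=
  (equation_iff_nonsingular_of_Δ_ne_zero (Wm_Δ_ne_zero hme)).mp h

lemma Wm_add_self_eq_zero_of_isOfFinAddOrder {S : (Wm m).Point} (hS : IsOfFinAddOrder S) :
    S + S = 0 := by
  have he : padicNorm 2 ((m : ℚ) ^ 4 - 1) = 1 := by
    have := (padicNorm.int_eq_one_iff (p := 2) (m ^ 4 - 1)).mpr
      (by simpa [← even_iff_two_dvd] using hme.odd_pow_four_sub_one)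
    exact_mod_cast this
  generalize hT : S + S = T
  rcases T with _ | @⟨x, y, h⟩
  · rfl
  exfalso
  have hx : (some x y h).padicNormX (Wm m) 2 ≤ 1 :=
    Wm_padicNormX_le_one_of_isOfFinAddOrder (hT ▸ hS.add hS)
  obtain ⟨a, ha⟩ := isSquare_sub_of_add_self_eq_some rfl rfl (e := (m : ℚ) ^ 4 - 1)
    (Wm_equation_iff.mpr (by ring)) hT
  obtain ⟨b, hb⟩ := isSquare_sub_of_add_self_eq_some rfl rfl (e := -((m : ℚ) ^ 4 - 1))
    (Wm_equation_iff.mpr (by ring)) hT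
  have hsq : ∀ {c d : ℚ}, x - d = c * c → padicNorm 2 d ≤ 1 → padicNorm 2 c ≤ 1 := by
    intro c d hc hd
    have : padicNorm 2 c ^ 2 ≤ 1 := by
      rw [← padicNorm.pow, sq, ← hc]
      exact padicNorm.sub.trans (max_le hx hd)
    exact (pow_le_one_iff_of_nonneg (padicNorm.nonneg c) two_ne_zero).mp this
  apply padicNorm_sq_sub_sq_ne_inv_two (hsq ha he.le) (hsq hb (by rw [padicNorm.neg, he]))
  rw [show a ^ 2 - b ^ 2 = -(2 * ((m : ℚ) ^ 4 - 1)) by linear_combination hb - ha, padicNorm.neg,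
    padicNorm.mul, padicNorm_two_two, he, mul_one]

lemma exists_Wm_torsion_eq_zero_or_eq : ∃ t₁ t₂ t₃ : AddCommGroup.torsion (Wm m).Point,
    t₁ ≠ 0 ∧ t₂ ≠ 0 ∧ t₁ ≠ t₂ ∧ ∀ t, t = 0 ∨ t = t₁ ∨ t = t₂ ∨ t = t₃ := by
  have hY : ∀ {x y : ℚ}, y = (Wm m).negY x y ↔ y = 0 := by
    intro x y
    simp only [negY, Wm]
    exact ⟨fun h => by linear_combination h / 2, fun h => by linear_combination 2 * h⟩
  let T (e : ℚ) (he : (Wm m).Equation e 0) : AddCommGroup.torsion (Wm m).Point :=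
    ⟨some e 0 (Wm_nonsingular hme he), isOfFinAddOrder_iff_nsmul_eq_zero.mpr
      ⟨2, two_pos, by rw [two_nsmul, some_add_self_eq_zero_iff, hY]⟩⟩
  have he₁ : (Wm m).Equation ((m : ℚ) ^ 4 - 1) 0 := Wm_equation_iff.mpr (by ring)
  have he₂ : (Wm m).Equation (-((m : ℚ) ^ 4 - 1)) 0 := Wm_equation_iff.mpr (by ring)
  have he₃ : (Wm m).Equation (4 * (m : ℚ) ^ 2) 0 := Wm_equation_iff.mpr (by ring)
  refine ⟨T _ he₁, T _ he₂, T _ he₃, fun h => some_ne_zero _ (congrArg Subtype.val h),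
    fun h => some_ne_zero _ (congrArg Subtype.val h), fun h => ?_, ?_⟩
  · have := (some.inj (congrArg Subtype.val h)).1
    exact cast_pow_four_sub_one_ne_zero hme (by linear_combination this / 2)
  · rintro ⟨P, hP⟩
    have h2 := Wm_add_self_eq_zero_of_isOfFinAddOrder hme hP
    rcases P with _ | @⟨x, y, h⟩
    · exact Or.inl rfl
    obtain rfl := hY.mp ((some_add_self_eq_zero_iff h).mp h2)
    have hx : (x - ((m : ℚ) ^ 4 - 1)) * (x + ((m : ℚ) ^ 4 - 1)) * (x - 4 * (m : ℚ) ^ 2) = 0 := by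
      linear_combination -Wm_equation_iff.mp h.1
    rcases mul_eq_zero.mp hx with hx | hx
    · rcases mul_eq_zero.mp hx with hx | hx
      · obtain rfl : x = (m : ℚ) ^ 4 - 1 := by linear_combination hx
        exact Or.inr (Or.inl rfl)
      · obtain rfl : x = -((m : ℚ) ^ 4 - 1) := by linear_combination hx
        exact Or.inr (Or.inr (Or.inl rfl))
    · obtain rfl : x = 4 * (m : ℚ) ^ 2 := by linear_combination hx
      exact Or.inr (Or.inr (Or.inr rfl))

end Wm

theorem stmt11_general (m : ℤ) (hme : Even m) :
    Nonempty (AddCommGroup.torsion (Wm m).Point ≃+ (ZMod 2 × ZMod 2)) := by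
  obtain ⟨t₁, t₂, t₃, h₁, h₂, h₁₂, ht⟩ := exists_Wm_torsion_eq_zero_or_eq hme
  exact AddCommGroup.nonempty_addEquiv_zmod_two_prod
    (fun t => Subtype.ext (Wm_add_self_eq_zero_of_isOfFinAddOrder hme t.2)) h₁ h₂ h₁₂ ht

/-- The torsion subgroup of E_m(ℚ) is ℤ/2ℤ × ℤ/2ℤ. -/
theorem stmt11 (m : ℤ) (hm : 4 ≤ m) (hme : Even m)
    (h1 : Prime (m - 1)) (h2 : Prime (m + 1)) :
    Nonempty (AddCommGroup.torsion (Wm m).Point ≃+ (ZMod 2 × ZMod 2)) :=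
  stmt11_general m hme
end
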